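/- arXiv:1302.5002 — 3 statements merged into one kernel-verified Lean document; each statement's English description precedes it below -/
import Mathlib

section
/- Let α > 2, ρ_p > 0, ν ∈ (0,1], and c > 0 be real numbers with c·ν > 1, and set ρ = ν·ρ_p and t₀ = (π ρ_p / c)^{α/2}. Then there exists a unique β > 0 satisfying 1 = (2πρβ/α) · ∫_{t₀}^{∞} τ^{-2/α} / (1 + τβ) dτ. -/
open MeasureTheory Set Real

namespace Stmt1Aux

/-- integrand -/
noncomputable def f (p β τ : ℝ) : ℝ := τ ^ p / (1 + τ * β)

lemma f_meas (p β : ℝ) : Measurable (f p β) := by unfold f; fun_prop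

lemma f_nonneg {p β τ : ℝ} (hτ : 0 < τ) (hβ : 0 < β) : 0 ≤ f p β τ := by
  apply div_nonneg (rpow_nonneg hτ.le _)
  nlinarith

lemma f_le {p β τ : ℝ} (hτ : 0 < τ) (hβ : 0 < β) :
    f p β τ ≤ τ ^ (p - 1) * β⁻¹ := by
  have h1 : 0 < τ * β := mul_pos hτ hβ
  have h2 : f p β τ ≤ τ ^ p / (τ * β) := by
    apply div_le_div_of_nonneg_left (rpow_nonneg hτ.le _) h1
    linarith
  calc f p β τ ≤ τ ^ p / (τ * β) := h2
    _ = τ ^ (p - 1) * β⁻¹ := by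
        rw [rpow_sub hτ, rpow_one]; ring

lemma f_ge {p t₀ β : ℝ} (ht : 0 < t₀) (hβ : 0 < β) {τ : ℝ} (hτ : t₀ < τ) :
    τ ^ (p - 1) * (β + t₀⁻¹)⁻¹ ≤ f p β τ := by
  have hτ0 : 0 < τ := ht.trans hτ
  have hden : 0 < 1 + τ * β := by nlinarith
  have hden2 : 0 < τ * (β + t₀⁻¹) := by positivity
  have h1 : 1 + τ * β ≤ τ * (β + t₀⁻¹) := by
    have : 1 ≤ τ * t₀⁻¹ := by
      rw [← div_eq_mul_inv, le_div_iff₀ ht]; linarith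
    nlinarith
  have h2 : τ ^ p / (τ * (β + t₀⁻¹)) ≤ f p β τ :=
    div_le_div_of_nonneg_left (rpow_nonneg hτ0.le _) hden h1
  calc τ ^ (p - 1) * (β + t₀⁻¹)⁻¹ = τ ^ p / (τ * (β + t₀⁻¹)) := by
        rw [← div_eq_mul_inv, rpow_sub hτ0, rpow_one, div_div]
    _ ≤ f p β τ := h2

/-- small-β pointwise bound with exponent gain `s` -/
lemma f_le_rpow {p β τ s : ℝ} (hτ : 0 < τ) (hβ : 0 < β) (hs : 0 < s) (hs1 : s ≤ 1) :
    f p β τ ≤ β ^ (s - 1) * τ ^ (p - 1 + s) := by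
  have hx : 0 < τ * β := mul_pos hτ hβ
  have key : τ * β / (1 + τ * β) ≤ (τ * β) ^ s := by
    rcases le_total (τ * β) 1 with h | h
    · calc τ * β / (1 + τ * β) ≤ τ * β := by
            rw [div_le_iff₀ (by linarith)]; nlinarith
        _ = (τ * β) ^ (1 : ℝ) := (rpow_one _).symm
        _ ≤ (τ * β) ^ s := rpow_le_rpow_of_exponent_ge hx h hs1
    · calc τ * β / (1 + τ * β) ≤ 1 := by
            rw [div_le_one (by linarith)]; linarith
        _ ≤ (τ * β) ^ s := one_le_rpow h hs.le
  have hrw : f p β τ = τ ^ (p - 1) * β⁻¹ * (τ * β / (1 + τ * β)) := by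
    unfold f
    have hden : (1 : ℝ) + τ * β ≠ 0 := by nlinarith
    rw [rpow_sub hτ, rpow_one]
    field_simp
  rw [hrw]
  calc τ ^ (p - 1) * β⁻¹ * (τ * β / (1 + τ * β))
      ≤ τ ^ (p - 1) * β⁻¹ * (τ * β) ^ s := by
        apply mul_le_mul_of_nonneg_left key (by positivity)
    _ = β ^ (s - 1) * τ ^ (p - 1 + s) := by
        rw [mul_rpow hτ.le hβ.le, rpow_sub hβ, rpow_one, rpow_add hτ]
        field_simp

lemma intOn_rpow {q t₀ : ℝ} (hq : q < -1) (ht : 0 < t₀) :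
    IntegrableOn (fun τ : ℝ => τ ^ q) (Ioi t₀) :=
  integrableOn_Ioi_rpow_of_lt hq ht

lemma f_intOn {p t₀ β : ℝ} (hp : p < 0) (ht : 0 < t₀) (hβ : 0 < β) :
    IntegrableOn (f p β) (Ioi t₀) := by
  have hb : IntegrableOn (fun τ : ℝ => τ ^ (p - 1) * β⁻¹) (Ioi t₀) :=
    (intOn_rpow (by linarith) ht).mul_const _
  refine hb.mono' ((f_meas p β).aestronglyMeasurable) ?_
  rw [ae_restrict_iff' measurableSet_Ioi]
  filter_upwards with τ hτ
  have hτ0 : 0 < τ := ht.trans hτ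
  rw [Real.norm_eq_abs, abs_of_nonneg (f_nonneg hτ0 hβ)]
  exact f_le hτ0 hβ

/-- the integral of `τ^(p-1)` over `Ioi t₀` -/
lemma int_rpow_val {p t₀ : ℝ} (hp1 : -1 < p) (hp0 : p < 0) (ht : 0 < t₀) :
    ∫ τ in Ioi t₀, τ ^ (p - 1) = -t₀ ^ p / p := by
  rw [integral_Ioi_rpow_of_lt (by linarith) ht]
  ring_nf

noncomputable def I (p t₀ β : ℝ) : ℝ := ∫ τ in Ioi t₀, f p β τ

lemma I_ge {p t₀ β : ℝ} (hp1 : -1 < p) (hp0 : p < 0) (ht : 0 < t₀) (hβ : 0 < β) :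
    (-t₀ ^ p / p) * (β + t₀⁻¹)⁻¹ ≤ I p t₀ β := by
  have h1 : IntegrableOn (fun τ : ℝ => τ ^ (p - 1) * (β + t₀⁻¹)⁻¹) (Ioi t₀) :=
    (intOn_rpow (by linarith) ht).mul_const _
  have h2 : (∫ τ in Ioi t₀, τ ^ (p - 1) * (β + t₀⁻¹)⁻¹) ≤ I p t₀ β := by
    apply setIntegral_mono_on h1 (f_intOn hp0 ht hβ) measurableSet_Ioi
    intro τ hτ
    exact f_ge ht hβ hτ
  calc (-t₀ ^ p / p) * (β + t₀⁻¹)⁻¹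
      = ∫ τ in Ioi t₀, τ ^ (p - 1) * (β + t₀⁻¹)⁻¹ := by
        rw [integral_mul_const, int_rpow_val hp1 hp0 ht]
    _ ≤ I p t₀ β := h2

lemma I_le_rpow {p t₀ β : ℝ} (hp1 : -1 < p) (hp0 : p < 0) (ht : 0 < t₀) (hβ : 0 < β) :
    I p t₀ β ≤ β ^ (-p/2 - 1) * (-t₀ ^ (p/2) / (p/2)) := by
  have hs : (0:ℝ) < -p/2 := by linarith
  have hs1 : -p/2 ≤ 1 := by linarith
  have hexp : p - 1 + -p/2 = p/2 - 1 := by ring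
  have h1 : IntegrableOn (fun τ : ℝ => β ^ (-p/2 - 1) * τ ^ (p/2 - 1)) (Ioi t₀) :=
    (intOn_rpow (by linarith) ht).const_mul _
  have h2 : I p t₀ β ≤ ∫ τ in Ioi t₀, β ^ (-p/2 - 1) * τ ^ (p/2 - 1) := by
    apply setIntegral_mono_on (f_intOn hp0 ht hβ) h1 measurableSet_Ioi
    intro τ hτ
    have := f_le_rpow (p := p) (ht.trans hτ) hβ hs hs1
    rw [hexp] at this
    exact this
  calc I p t₀ β ≤ ∫ τ in Ioi t₀, β ^ (-p/2 - 1) * τ ^ (p/2 - 1) := h2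
    _ = β ^ (-p/2 - 1) * (-t₀ ^ (p/2) / (p/2)) := by
        rw [integral_const_mul, integral_Ioi_rpow_of_lt (by linarith) ht]
        ring_nf

/-- strict monotonicity of `β ↦ β * I β` on `Ioi 0`. -/
lemma betaI_strictMono {p t₀ : ℝ} (hp0 : p < 0) (ht : 0 < t₀) :
    StrictMonoOn (fun β => β * I p t₀ β) (Ioi (0:ℝ)) := by
  intro β₁ hβ₁ β₂ hβ₂ hlt
  simp only [mem_Ioi] at hβ₁ hβ₂
  have hi₁ := f_intOn (t₀ := t₀) hp0 ht hβ₁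
  have hi₂ := f_intOn (t₀ := t₀) hp0 ht hβ₂
  have hg : IntegrableOn (fun τ => β₂ * f p β₂ τ - β₁ * f p β₁ τ) (Ioi t₀) :=
    (hi₂.const_mul β₂).sub (hi₁.const_mul β₁)
  have hpos : ∀ τ ∈ Ioi t₀, 0 < β₂ * f p β₂ τ - β₁ * f p β₁ τ := by
    intro τ hτ
    have hτ0 : 0 < τ := ht.trans hτ
    have hd₁ : 0 < 1 + τ * β₁ := by nlinarith
    have hd₂ : 0 < 1 + τ * β₂ := by nlinarith
    have hrp : 0 < τ ^ p := rpow_pos_of_pos hτ0 _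
    unfold f
    rw [sub_pos, mul_div_assoc', mul_div_assoc', mul_comm β₁, mul_comm β₂,
      div_lt_div_iff₀ hd₁ hd₂]
    nlinarith
  have hInt : 0 < ∫ τ in Ioi t₀, (β₂ * f p β₂ τ - β₁ * f p β₁ τ) := by
    rw [setIntegral_pos_iff_support_of_nonneg_ae _ hg]
    · have hsub : Ioi t₀ ⊆ Function.support (fun τ => β₂ * f p β₂ τ - β₁ * f p β₁ τ) ∩ Ioi t₀ :=
        fun τ hτ => ⟨(hpos τ hτ).ne', hτ⟩
      calc (0:ENNReal) < volume (Ioi t₀) := by rw [Real.volume_Ioi]; exact ENNReal.zero_lt_top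
        _ ≤ _ := measure_mono hsub
    · exact MeasureTheory.ae_restrict_of_forall_mem measurableSet_Ioi
        (fun τ hτ => (hpos τ hτ).le)
  have hsub2 := integral_sub (hi₂.const_mul β₂) (hi₁.const_mul β₁)
  have h₁ := integral_const_mul β₁ (f p β₁) (μ := volume.restrict (Ioi t₀))
  have h₂ := integral_const_mul β₂ (f p β₂) (μ := volume.restrict (Ioi t₀))
  simp only [I]
  rw [hsub2] at hInt
  rw [h₁, h₂] at hInt
  linarith

/-- continuity of `β ↦ I β` at positive points -/
lemma I_contAt {p t₀ : ℝ} (hp0 : p < 0) (ht : 0 < t₀) {β₀ : ℝ} (hβ₀ : 0 < β₀) :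
    ContinuousAt (fun β => I p t₀ β) β₀ := by
  apply continuousAt_of_dominated (bound := fun τ => τ ^ (p - 1) * (β₀/2)⁻¹)
  · filter_upwards with β using (f_meas p β).aestronglyMeasurable
  · have hmem : Ioi (β₀/2) ∈ nhds β₀ := Ioi_mem_nhds (by linarith)
    filter_upwards [hmem] with β hβ
    simp only [mem_Ioi] at hβ
    rw [ae_restrict_iff' measurableSet_Ioi]
    filter_upwards with τ hτ
    have hτ0 : 0 < τ := ht.trans hτ
    have hβpos : 0 < β := lt_trans (by linarith) hβ
    rw [Real.norm_eq_abs, abs_of_nonneg (f_nonneg hτ0 hβpos)]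
    calc f p β τ ≤ τ ^ (p - 1) * β⁻¹ := f_le hτ0 hβpos
      _ ≤ τ ^ (p - 1) * (β₀/2)⁻¹ := by
          apply mul_le_mul_of_nonneg_left _ (rpow_nonneg hτ0.le _)
          exact inv_anti₀ (by linarith) hβ.le
  · exact (intOn_rpow (by linarith) ht).mul_const _
  · rw [ae_restrict_iff' measurableSet_Ioi]
    filter_upwards with τ hτ
    have hτ0 : 0 < τ := ht.trans hτ
    have hd : 1 + τ * β₀ ≠ 0 := by nlinarith
    exact ContinuousAt.div continuousAt_const
      ((continuous_const.add (continuous_mul_left τ)).continuousAt) hd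

end Stmt1Aux

set_option maxHeartbeats 1600000 in
/-- Let `α > 2`, `ρ_p > 0`, `ν ∈ (0,1]`, `c > 0` with `c·ν > 1`, and set
`ρ = ν·ρ_p` and `t₀ = (π ρ_p / c)^(α/2)`.  Then there exists a unique `β > 0` satisfying
`1 = (2πρβ/α) · ∫_{t₀}^{∞} τ^{-2/α} / (1 + τβ) dτ`. -/
theorem stmt1 (α ρp ν c : ℝ) (hα : 2 < α) (hρp : 0 < ρp) (hν : ν ∈ Ioc (0:ℝ) 1)
    (hc : 0 < c) (hcν : 1 < c * ν) (ρ t₀ : ℝ) (hρ : ρ = ν * ρp)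
    (ht₀ : t₀ = (π * ρp / c) ^ (α / 2)) :
    ∃ β : ℝ, 0 < β ∧
      1 = (2 * π * ρ * β / α) * ∫ τ in Ioi t₀, τ ^ (-2 / α) / (1 + τ * β) ∧
      ∀ β' : ℝ, 0 < β' →
        1 = (2 * π * ρ * β' / α) * ∫ τ in Ioi t₀, τ ^ (-2 / α) / (1 + τ * β') → β' = β := by
  have hπ : 0 < π := pi_pos
  have hν0 : 0 < ν := hν.1
  have hρ0 : 0 < ρ := by rw [hρ]; positivity
  have hα0 : 0 < α := by linarith
  have hq : 0 < π * ρp / c := by positivity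
  have ht₀pos : 0 < t₀ := by rw [ht₀]; exact rpow_pos_of_pos hq _
  set p : ℝ := -2 / α with hpdef
  have hp0 : p < 0 := by
    rw [hpdef]; apply div_neg_of_neg_of_pos (by norm_num) hα0
  have hp1 : -1 < p := by
    rw [hpdef, neg_div, neg_lt_neg_iff, div_lt_one hα0]; exact hα
  set K : ℝ := 2 * π * ρ / α with hKdef
  have hK : 0 < K := by rw [hKdef]; positivity
  set F : ℝ → ℝ := fun β => K * (β * Stmt1Aux.I p t₀ β) with hFdef
  have hFeq : ∀ β : ℝ,
      (2 * π * ρ * β / α) * ∫ τ in Ioi t₀, τ ^ (-2 / α) / (1 + τ * β) = F β := by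
    intro β
    rw [hFdef]
    simp only [Stmt1Aux.I, Stmt1Aux.f, hKdef, ← hpdef]
    ring
  -- value of t₀ ^ p
  have ht₀p : t₀ ^ p = (π * ρp / c)⁻¹ := by
    rw [ht₀, ← Real.rpow_mul hq.le]
    have : α / 2 * p = -1 := by rw [hpdef]; field_simp
    rw [this, rpow_neg_one]
  have key : K * (-t₀ ^ p / p) = c * ν := by
    rw [ht₀p, hKdef, hρ, hpdef]
    field_simp
  -- monotonicity of F
  have hmono : StrictMonoOn F (Ioi (0:ℝ)) := by
    intro a ha b hb hab
    exact mul_lt_mul_of_pos_left (Stmt1Aux.betaI_strictMono hp0 ht₀pos ha hb hab) hK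
  -- small β : F β < 1 eventually
  have hC : 0 < -t₀ ^ (p/2) / (p/2) := by
    apply div_pos_of_neg_of_neg
    · simp only [neg_neg, Left.neg_neg_iff]; exact rpow_pos_of_pos ht₀pos _
    · linarith
  set C : ℝ := -t₀ ^ (p/2) / (p/2) with hCdef
  have hs : (0:ℝ) < -p/2 := by linarith
  have hFsmall : ∀ β : ℝ, 0 < β → F β ≤ K * C * β ^ (-p/2) := by
    intro β hβ
    have h1 : Stmt1Aux.I p t₀ β ≤ β ^ (-p/2 - 1) * C :=
      Stmt1Aux.I_le_rpow hp1 hp0 ht₀pos hβ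
    have h2 : β * β ^ (-p/2 - 1) = β ^ (-p/2) := by
      nth_rewrite 1 [← rpow_one β]
      rw [← rpow_add hβ]; norm_num
    calc F β = K * (β * Stmt1Aux.I p t₀ β) := rfl
      _ ≤ K * (β * (β ^ (-p/2 - 1) * C)) := by
          apply mul_le_mul_of_nonneg_left _ hK.le
          exact mul_le_mul_of_nonneg_left h1 hβ.le
      _ = K * C * β ^ (-p/2) := by
          rw [show K * (β * (β ^ (-p/2 - 1) * C)) = K * C * (β * β ^ (-p/2 - 1)) from by ring, h2]
  have htends : Filter.Tendsto (fun β : ℝ => K * C * β ^ (-p/2)) (nhdsWithin 0 (Ioi 0)) (nhds 0) := by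
    have h1 : Filter.Tendsto (fun β : ℝ => β ^ (-p/2)) (nhds 0) (nhds 0) := by
      have := (Real.continuousAt_rpow_const 0 (-p/2) (Or.inr hs.le)).tendsto
      rwa [Real.zero_rpow hs.ne'] at this
    have h2 := (h1.const_mul (K * C)).mono_left (nhdsWithin_le_nhds (s := Ioi (0:ℝ)))
    simpa using h2
  have hev : ∀ᶠ β in nhdsWithin (0:ℝ) (Ioi 0), K * C * β ^ (-p/2) < 1 :=
    htends.eventually_lt_const (by norm_num)
  obtain ⟨β₁, hβ₁lt, hβ₁pos'⟩ := (hev.and self_mem_nhdsWithin).exists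
  have hβ₁pos : 0 < β₁ := hβ₁pos'
  have hFβ₁ : F β₁ < 1 := lt_of_le_of_lt (hFsmall β₁ hβ₁pos) hβ₁lt
  -- large β : F β₂ > 1
  set β₂ : ℝ := (t₀ * (c * ν - 1))⁻¹ + β₁ + 1 with hβ₂def
  have hden : 0 < t₀ * (c * ν - 1) := by nlinarith
  have hβ₂pos : 0 < β₂ := by
    have : 0 < (t₀ * (c * ν - 1))⁻¹ := inv_pos.2 hden
    rw [hβ₂def]; linarith
  have hFβ₂ : 1 < F β₂ := by
    have hge := Stmt1Aux.I_ge hp1 hp0 ht₀pos hβ₂pos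
    have hsum : 0 < β₂ + t₀⁻¹ := by positivity
    have hlow : K * (-t₀ ^ p / p) * (β₂ * (β₂ + t₀⁻¹)⁻¹) ≤ F β₂ := by
      calc K * (-t₀ ^ p / p) * (β₂ * (β₂ + t₀⁻¹)⁻¹)
          = K * (β₂ * ((-t₀ ^ p / p) * (β₂ + t₀⁻¹)⁻¹)) := by ring
        _ ≤ K * (β₂ * Stmt1Aux.I p t₀ β₂) := by
            apply mul_le_mul_of_nonneg_left _ hK.le
            exact mul_le_mul_of_nonneg_left hge hβ₂pos.le
    have hfrac : 1 < c * ν * (β₂ * (β₂ + t₀⁻¹)⁻¹) := by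
      have e1 : (t₀ * (c * ν - 1))⁻¹ * (c * ν - 1) = t₀⁻¹ := by
        rw [mul_inv, mul_assoc, inv_mul_cancel₀ (by nlinarith : c * ν - 1 ≠ 0), mul_one]
      have e2 : β₂ + t₀⁻¹ < c * ν * β₂ := by
        have h3 : t₀⁻¹ < (c * ν - 1) * β₂ := by
          rw [hβ₂def]; nlinarith
        nlinarith
      calc (1:ℝ) = (β₂ + t₀⁻¹) * (β₂ + t₀⁻¹)⁻¹ := (mul_inv_cancel₀ hsum.ne').symm
        _ < c * ν * β₂ * (β₂ + t₀⁻¹)⁻¹ := mul_lt_mul_of_pos_right e2 (inv_pos.2 hsum)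
        _ = c * ν * (β₂ * (β₂ + t₀⁻¹)⁻¹) := by ring
    rw [key] at hlow
    calc (1:ℝ) < c * ν * (β₂ * (β₂ + t₀⁻¹)⁻¹) := hfrac
      _ ≤ F β₂ := by linarith [hlow]
  -- continuity and IVT
  have hβ₁₂ : β₁ ≤ β₂ := by
    have : 0 < (t₀ * (c * ν - 1))⁻¹ := inv_pos.2 hden
    rw [hβ₂def]; linarith
  have hcont : ContinuousOn F (Icc β₁ β₂) := by
    intro x hx
    have hx0 : 0 < x := lt_of_lt_of_le hβ₁pos hx.1
    exact (continuousAt_const.mul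
      (continuousAt_id.mul (Stmt1Aux.I_contAt hp0 ht₀pos hx0))).continuousWithinAt
  have hivt := intermediate_value_Icc hβ₁₂ hcont
  have h1mem : (1:ℝ) ∈ Icc (F β₁) (F β₂) := ⟨hFβ₁.le, hFβ₂.le⟩
  obtain ⟨β, hβmem, hFβ⟩ := hivt h1mem
  have hβpos : 0 < β := lt_of_lt_of_le hβ₁pos hβmem.1
  refine ⟨β, hβpos, ?_, ?_⟩
  · rw [hFeq β, hFβ]
  · intro β' hβ' h'
    rw [hFeq β'] at h'
    exact hmono.injOn (mem_Ioi.2 hβ') (mem_Ioi.2 hβpos) (by rw [← h', hFβ])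
end

section
/- Let α > 2, ρ_p > 0, and ν ∈ (0,1] be fixed real numbers and set ρ = ν·ρ_p. For each c > 1/ν let β_c be the unique positive solution of 1 = (2πρβ/α) · ∫_{(π ρ_p/c)^{α/2}}^{∞} τ^{-2/α} / (1 + τβ) dτ. Then lim_{c→∞} β_c = [ (α/(2π²ρ)) · sin(2π/α) ]^{α/2}. -/
/-!
Put `s = 1 - 2 / α ∈ (0, 1)` and `G(t) = betaTail s t = ∫_t^∞ u^(s-1) / (1 + u) du`.
Substituting `τ = u / β` turns the fixed-point equation into `β^(2/α) G(a β) = α / (2πρ)` with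
`a = (πρ_p / c)^(α/2) → 0`. Multiplying by `a^(2/α)` and using `G(x) ≥ x^s / ((1 - s)(1 + x))`
shows `a β → 0`, so `G(a β) → G(0) = B(s, 1 - s) = π / sin(πs)` and
`β^(2/α) → α sin(2π/α) / (2π²ρ)`.
-/

open MeasureTheory Set Real Filter Topology

section BetaTail

variable {s : ℝ}

lemma integrableOn_rpow_div_one_add (hs0 : 0 < s) (hs1 : s < 1) :
    IntegrableOn (fun u : ℝ => u ^ (s - 1) / (1 + u)) (Ioi 0) := by
  have hmeas : AEStronglyMeasurable (fun u : ℝ => u ^ (s - 1) / (1 + u)) :=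
    ((measurable_id.pow_const _).div (measurable_const.add measurable_id)).aestronglyMeasurable
  have near_zero : IntegrableOn (fun u : ℝ => u ^ (s - 1) / (1 + u)) (Ioc 0 1) := by
    refine Integrable.mono (intervalIntegral.intervalIntegrable_rpow' (r := s - 1) (by linarith)).1
      hmeas.restrict ?_
    filter_upwards [ae_restrict_mem measurableSet_Ioc] with u hu
    have : 0 ≤ u ^ (s - 1) := rpow_nonneg hu.1.le _
    rw [norm_of_nonneg this, norm_of_nonneg (div_nonneg this (by linarith [hu.1]))]
    exact div_le_self this (by linarith [hu.1])
  have near_top : IntegrableOn (fun u : ℝ => u ^ (s - 1) / (1 + u)) (Ioi 1) := by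
    refine Integrable.mono (integrableOn_Ioi_rpow_of_lt (by linarith : s - 2 < -1) one_pos)
      hmeas.restrict ?_
    filter_upwards [ae_restrict_mem measurableSet_Ioi] with u (hu : 1 < u)
    have hu0 : 0 < u := by linarith
    rw [norm_of_nonneg (by positivity), norm_of_nonneg (by positivity),
      div_le_iff₀ (by linarith), show s - 1 = s - 2 + 1 by ring, rpow_add_one hu0.ne']
    gcongr
    linarith
  simpa [Ioc_union_Ioi_eq_Ioi zero_le_one] using near_zero.union near_top

lemma betaIntegral_eq_pi_div_sin (hs0 : 0 < s) (hs1 : s < 1) :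
    Complex.betaIntegral s (1 - s) = ((π / sin (π * s) : ℝ) : ℂ) := by
  have h := Complex.Gamma_mul_Gamma_eq_betaIntegral (s := s) (t := 1 - s)
    (by simpa using hs0) (by simpa using hs1)
  rw [Complex.Gamma_mul_Gamma_one_sub, add_sub_cancel, Complex.Gamma_one, one_mul] at h
  rw [← h]
  push_cast
  rfl

lemma integral_rpow_mul_one_sub_rpow (hs0 : 0 < s) (hs1 : s < 1) :
    ∫ x in (0:ℝ)..1, x ^ (s - 1) * (1 - x) ^ (-s) = π / sin (π * s) := by
  have h : Complex.betaIntegral s (1 - s) =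
      ((∫ x in (0:ℝ)..1, x ^ (s - 1) * (1 - x) ^ (-s) : ℝ) : ℂ) := by
    rw [Complex.betaIntegral, ← intervalIntegral.integral_ofReal]
    refine intervalIntegral.integral_congr fun x hx => ?_
    rw [uIcc_of_le zero_le_one] at hx
    simp only [Complex.ofReal_mul, Complex.ofReal_cpow hx.1,
      Complex.ofReal_cpow (sub_nonneg.2 hx.2)]
    push_cast
    ring_nf
  exact_mod_cast h.symm.trans (betaIntegral_eq_pi_div_sin hs0 hs1)

lemma image_div_one_sub_Ioo : (fun x : ℝ => x / (1 - x)) '' Ioo 0 1 = Ioi 0 := by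
  ext u
  constructor
  · rintro ⟨x, ⟨hx0, hx1⟩, rfl⟩
    exact div_pos hx0 (by linarith)
  · intro (hu : 0 < u)
    refine ⟨u / (1 + u), ⟨by positivity, (div_lt_one (by linarith)).2 (by linarith)⟩, ?_⟩
    field_simp
    ring

lemma injOn_div_one_sub : InjOn (fun x : ℝ => x / (1 - x)) (Iio 1) := by
  intro x (hx : x < 1) y (hy : y < 1) h
  rw [div_eq_div_iff (by linarith) (by linarith)] at h
  linarith

lemma hasDerivAt_div_one_sub {x : ℝ} (hx : x ≠ 1) :
    HasDerivAt (fun x : ℝ => x / (1 - x)) ((1 - x) ^ 2)⁻¹ x := by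
  have hx' : 1 - x ≠ 0 := sub_ne_zero.2 hx.symm
  refine ((hasDerivAt_id' x).div ((hasDerivAt_id' x).const_sub 1) hx').congr_deriv ?_
  field_simp
  ring

noncomputable def betaTail (s t : ℝ) : ℝ := ∫ u in Ioi t, u ^ (s - 1) / (1 + u)

lemma betaTail_zero (hs0 : 0 < s) (hs1 : s < 1) : betaTail s 0 = π / sin (π * s) := by
  have hderiv : ∀ x ∈ Ioo (0:ℝ) 1,
      HasDerivWithinAt (fun x : ℝ => x / (1 - x)) ((1 - x) ^ 2)⁻¹ (Ioo 0 1) x :=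
    fun x hx => (hasDerivAt_div_one_sub hx.2.ne).hasDerivWithinAt
  have hjac : ∀ x ∈ Ioo (0:ℝ) 1, |((1 - x) ^ 2)⁻¹| •
      ((x / (1 - x)) ^ (s - 1) / (1 + x / (1 - x))) = x ^ (s - 1) * (1 - x) ^ (-s) := by
    intro x ⟨hx0, hx1⟩
    have hy : 0 < 1 - x := by linarith
    rw [smul_eq_mul, abs_of_pos (by positivity), div_rpow hx0.le hy.le,
      show -s = -(s - 1) - 1 by ring, rpow_sub_one hy.ne' (-(s - 1)), rpow_neg hy.le]
    have : 0 < (1 - x) ^ (s - 1) := rpow_pos_of_pos hy _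
    field_simp
    ring
  rw [betaTail, ← image_div_one_sub_Ioo,
    integral_image_eq_integral_abs_deriv_smul measurableSet_Ioo hderiv
      (injOn_div_one_sub.mono Ioo_subset_Iio_self), setIntegral_congr_fun measurableSet_Ioo hjac,
    ← integral_Ioc_eq_integral_Ioo, ← intervalIntegral.integral_of_le zero_le_one]
  exact integral_rpow_mul_one_sub_rpow hs0 hs1

lemma betaTail_zero_pos (hs0 : 0 < s) (hs1 : s < 1) : 0 < betaTail s 0 := by
  rw [betaTail_zero hs0 hs1]
  exact div_pos pi_pos (sin_pos_of_pos_of_lt_pi (by positivity) (by nlinarith [pi_pos]))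

lemma betaTail_antitoneOn (hs0 : 0 < s) (hs1 : s < 1) : AntitoneOn (betaTail s) (Ici 0) := by
  intro t₁ (ht₁ : 0 ≤ t₁) t₂ _ h
  refine setIntegral_mono_set
    ((integrableOn_rpow_div_one_add hs0 hs1).mono_set (Ioi_subset_Ioi ht₁)) ?_
    (Ioi_subset_Ioi h).eventuallyLE
  filter_upwards [ae_restrict_mem measurableSet_Ioi] with u (hu : t₁ < u)
  have : 0 < u := by linarith
  positivity

/-- Since `1 + u ≤ (1 + x) u / x` for `u ≥ x`, the tail dominates `x / (1 + x)` times the tail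
of `u ^ (s - 2)`. -/
lemma rpow_div_le_betaTail (hs0 : 0 < s) (hs1 : s < 1) {x : ℝ} (hx : 0 < x) :
    x ^ s / ((1 - s) * (1 + x)) ≤ betaTail s x := by
  have hbound : IntegrableOn (fun u : ℝ => x / (1 + x) * u ^ (s - 2)) (Ioi x) :=
    (integrableOn_Ioi_rpow_of_lt (by linarith) hx).const_mul _
  calc x ^ s / ((1 - s) * (1 + x)) = ∫ u in Ioi x, x / (1 + x) * u ^ (s - 2) := by
        rw [integral_const_mul, integral_Ioi_rpow_of_lt (by linarith) hx,
          show s - 2 + 1 = s - 1 by ring, rpow_sub_one hx.ne', neg_div, ← div_neg, neg_sub]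
        field_simp
    _ ≤ betaTail s x := by
      refine setIntegral_mono_on hbound
        ((integrableOn_rpow_div_one_add hs0 hs1).mono_set (Ioi_subset_Ioi hx.le))
        measurableSet_Ioi fun u (hu : x < u) => ?_
      have hu0 : 0 < u := by linarith
      rw [show s - 1 = s - 2 + 1 by ring, rpow_add_one hu0.ne', div_mul_eq_mul_div,
        div_le_div_iff₀ (by linarith) (by linarith)]
      have : 0 < u ^ (s - 2) := rpow_pos_of_pos hu0 _
      nlinarith

lemma div_one_add_le_rpow_mul_betaTail (hs0 : 0 < s) (hs1 : s < 1) {x : ℝ} (hx : 0 < x) :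
    x / (1 + x) ≤ (1 - s) * x ^ (1 - s) * betaTail s x :=
  calc x / (1 + x) = (1 - s) * x ^ (1 - s) * (x ^ s / ((1 - s) * (1 + x))) := by
        rw [mul_assoc, mul_div_assoc', ← rpow_add hx, sub_add_cancel, rpow_one]
        field_simp [(by linarith : 1 - s ≠ 0)]
    _ ≤ (1 - s) * x ^ (1 - s) * betaTail s x := by
        gcongr
        exact rpow_div_le_betaTail hs0 hs1 hx

lemma betaTail_zero_sub_le (hs0 : 0 < s) (hs1 : s < 1) {t : ℝ} (ht : 0 < t) :
    betaTail s 0 - t ^ s / s ≤ betaTail s t := by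
  have hint := integrableOn_rpow_div_one_add hs0 hs1
  have hsplit : betaTail s 0 = (∫ u in Ioc 0 t, u ^ (s - 1) / (1 + u)) + betaTail s t := by
    rw [betaTail, betaTail, ← setIntegral_union (Ioc_disjoint_Ioi le_rfl) measurableSet_Ioi
      (hint.mono_set Ioc_subset_Ioi_self) (hint.mono_set (Ioi_subset_Ioi ht.le)),
      Ioc_union_Ioi_eq_Ioi ht.le]
  have hhead : ∫ u in Ioc 0 t, u ^ (s - 1) / (1 + u) ≤ t ^ s / s := by
    calc ∫ u in Ioc 0 t, u ^ (s - 1) / (1 + u) ≤ ∫ u in Ioc 0 t, u ^ (s - 1) := by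
          refine setIntegral_mono_on (hint.mono_set Ioc_subset_Ioi_self)
            (intervalIntegral.intervalIntegrable_rpow' (r := s - 1) (by linarith)).1
            measurableSet_Ioc fun u hu => ?_
          exact div_le_self (rpow_nonneg hu.1.le _) (by linarith [hu.1])
      _ = t ^ s / s := by
          rw [← intervalIntegral.integral_of_le ht.le,
            integral_rpow (Or.inl (by linarith : (-1:ℝ) < s - 1)), sub_add_cancel,
            zero_rpow hs0.ne', sub_zero]
  linarith

lemma tendsto_betaTail_nhdsGT_zero (hs0 : 0 < s) (hs1 : s < 1) :
    Tendsto (betaTail s) (𝓝[>] 0) (𝓝 (betaTail s 0)) := by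
  have hlow : Tendsto (fun t => betaTail s 0 - t ^ s / s) (𝓝[>] 0) (𝓝 (betaTail s 0)) := by
    have : Tendsto (fun t : ℝ => t ^ s) (𝓝[>] 0) (𝓝 0) := by
      simpa [zero_rpow hs0.ne'] using
        ((continuousAt_rpow_const 0 s (Or.inr hs0.le)).tendsto).mono_left nhdsWithin_le_nhds
    simpa using tendsto_const_nhds.sub (this.div_const s)
  refine tendsto_of_tendsto_of_tendsto_of_le_of_le' hlow tendsto_const_nhds ?_ ?_
  · filter_upwards [self_mem_nhdsWithin] with t (ht : 0 < t)
    exact betaTail_zero_sub_le hs0 hs1 ht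
  · filter_upwards [self_mem_nhdsWithin] with t (ht : 0 < t)
    exact betaTail_antitoneOn hs0 hs1 self_mem_Ici ht.le ht.le

lemma integral_Ioi_rpow_div_one_add_mul {a b : ℝ} (ha : 0 ≤ a) (hb : 0 < b) :
    ∫ τ in Ioi a, τ ^ (s - 1) / (1 + τ * b) = b ^ (-s) * betaTail s (a * b) := by
  have hscale : ∀ τ ∈ Ioi a, τ ^ (s - 1) / (1 + τ * b)
      = b ^ (1 - s) * ((τ * b) ^ (s - 1) / (1 + τ * b)) := by
    intro τ (hτ : a < τ)
    rw [mul_rpow (by linarith) hb.le, ← mul_div_assoc, mul_left_comm,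
      ← rpow_add hb, sub_add_sub_cancel, sub_self, rpow_zero, mul_one]
  rw [setIntegral_congr_fun measurableSet_Ioi hscale, integral_const_mul,
    integral_comp_mul_right_Ioi (fun u => u ^ (s - 1) / (1 + u)) a hb, smul_eq_mul, betaTail,
    ← mul_assoc, ← rpow_neg_one, ← rpow_add hb]
  ring_nf

end BetaTail

section Limit

variable {s : ℝ} {ι : Type*} {l : Filter ι} {a β : ι → ℝ} {K : ℝ}

lemma tendsto_mul_nhdsGT_zero_of_rpow_mul_betaTail_eq (hs0 : 0 < s) (hs1 : s < 1)
    (ha : Tendsto a l (𝓝 0)) (ha0 : ∀ᶠ i in l, 0 < a i) (hβ0 : ∀ᶠ i in l, 0 < β i)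
    (heq : ∀ᶠ i in l, β i ^ (1 - s) * betaTail s (a i * β i) = K) :
    Tendsto (fun i => a i * β i) l (𝓝[>] 0) := by
  have hfrac : Tendsto (fun i => a i * β i / (1 + a i * β i)) l (𝓝 0) := by
    have hup : Tendsto (fun i => (1 - s) * K * a i ^ (1 - s)) l (𝓝 0) := by
      simpa [zero_rpow (by linarith : 1 - s ≠ 0)] using
        (ha.rpow_const (p := 1 - s) (Or.inr (by linarith))).const_mul ((1 - s) * K)
    refine tendsto_of_tendsto_of_tendsto_of_le_of_le' tendsto_const_nhds hup ?_ ?_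
    · filter_upwards [ha0, hβ0] with i hai hβi
      positivity
    · filter_upwards [ha0, hβ0, heq] with i hai hβi hi
      calc a i * β i / (1 + a i * β i)
          ≤ (1 - s) * (a i * β i) ^ (1 - s) * betaTail s (a i * β i) :=
            div_one_add_le_rpow_mul_betaTail hs0 hs1 (mul_pos hai hβi)
        _ = (1 - s) * K * a i ^ (1 - s) := by
            rw [← hi, mul_rpow hai.le hβi.le]
            ring
  have hx : Tendsto (fun i => a i * β i / (1 + a i * β i) / (1 - a i * β i / (1 + a i * β i)))
      l (𝓝 0) := by
    have := hfrac.div (tendsto_const_nhds.sub hfrac) (by norm_num : (1:ℝ) - 0 ≠ 0)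
    rwa [sub_zero, zero_div] at this
  refine tendsto_nhdsWithin_iff.2 ⟨hx.congr' ?_, ?_⟩
  · filter_upwards [ha0, hβ0] with i hai hβi
    have : 0 < a i * β i := mul_pos hai hβi
    field_simp
    ring
  · filter_upwards [ha0, hβ0] with i hai hβi
    exact mul_pos hai hβi

theorem tendsto_rpow_of_rpow_mul_betaTail_eq (hs0 : 0 < s) (hs1 : s < 1)
    (ha : Tendsto a l (𝓝 0)) (ha0 : ∀ᶠ i in l, 0 < a i) (hβ0 : ∀ᶠ i in l, 0 < β i)
    (heq : ∀ᶠ i in l, β i ^ (1 - s) * betaTail s (a i * β i) = K) :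
    Tendsto (fun i => β i ^ (1 - s)) l (𝓝 (K / betaTail s 0)) := by
  have hG := (tendsto_betaTail_nhdsGT_zero hs0 hs1).comp
    (tendsto_mul_nhdsGT_zero_of_rpow_mul_betaTail_eq hs0 hs1 ha ha0 hβ0 heq)
  refine (tendsto_const_nhds.div hG (betaTail_zero_pos hs0 hs1).ne').congr' ?_
  filter_upwards [ha0, hβ0, heq] with i hai hβi hi
  have hx : 0 < a i * β i := mul_pos hai hβi
  have hGpos : 0 < betaTail s (a i * β i) :=
    lt_of_lt_of_le (by have := rpow_pos_of_pos hx s; positivity) (rpow_div_le_betaTail hs0 hs1 hx)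
  show K / betaTail s (a i * β i) = _
  rw [← hi, mul_div_cancel_right₀ _ hGpos.ne']

end Limit

theorem stmt2_general (α ρp ν : ℝ) (hα : 2 < α) (hρp : 0 < ρp)
    (ρ : ℝ) (β : ℝ → ℝ)
    (hβpos : ∀ c : ℝ, 1 / ν < c → 0 < β c)
    (hβeq : ∀ c : ℝ, 1 / ν < c →
      1 = (2 * π * ρ * β c / α) *
        ∫ τ in Ioi ((π * ρp / c) ^ (α / 2)), τ ^ (-2 / α) / (1 + τ * β c)) :
    Tendsto β atTop (nhds ((α / (2 * π ^ 2 * ρ) * Real.sin (2 * π / α)) ^ (α / 2))) := by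
  have hα0 : 0 < α := by linarith
  set s := 1 - 2 / α with hs
  have hs0 : 0 < s := by rw [hs, sub_pos, div_lt_one hα0]; exact hα
  have hs1 : s < 1 := sub_lt_self 1 (by positivity)
  set a : ℝ → ℝ := fun c => (π * ρp / c) ^ (α / 2)
  have ha : Tendsto a atTop (𝓝 0) := by
    simpa [zero_rpow (by positivity : α / 2 ≠ 0)] using
      (tendsto_const_nhds (x := π * ρp) |>.div_atTop tendsto_id).rpow_const (p := α / 2)
        (Or.inr (by positivity))
  have ha0 : ∀ᶠ c in atTop, 0 < a c := by
    filter_upwards [eventually_gt_atTop 0] with c hc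
    exact rpow_pos_of_pos (by positivity) _
  have hβ0 : ∀ᶠ c in atTop, 0 < β c := by
    filter_upwards [eventually_gt_atTop (1 / ν)] with c hc using hβpos c hc
  have hkey : ∀ᶠ c in atTop, β c ^ (1 - s) * betaTail s (a c * β c) = α / (2 * π * ρ) := by
    filter_upwards [eventually_gt_atTop (1 / ν), ha0] with c hc hac
    have h := hβeq c hc
    rw [show -2 / α = s - 1 by ring, integral_Ioi_rpow_div_one_add_mul hac.le (hβpos c hc)] at h
    have hρ : ρ ≠ 0 := by rintro rfl; simp at h
    rw [eq_div_iff (by positivity), show 1 - s = 1 + -s by ring, rpow_add (hβpos c hc), rpow_one]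
    rw [div_mul_eq_mul_div, eq_div_iff hα0.ne', one_mul] at h
    linear_combination -h
  have hlim := (tendsto_rpow_of_rpow_mul_betaTail_eq hs0 hs1 ha ha0 hβ0 hkey).rpow_const
    (p := α / 2) (Or.inr (by positivity))
  have hval : α / (2 * π * ρ) / betaTail s 0 = α / (2 * π ^ 2 * ρ) * sin (2 * π / α) := by
    rw [betaTail_zero hs0 hs1, hs, show π * (1 - 2 / α) = π - 2 * π / α by ring, sin_pi_sub,
      div_div_eq_mul_div]
    ring
  rw [hval] at hlim
  refine hlim.congr' ?_
  filter_upwards [hβ0] with c hc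
  rw [← rpow_mul hc.le, hs, sub_sub_cancel, div_mul_div_cancel₀ hα0.ne', div_self two_ne_zero,
    rpow_one]

/-- Let `α > 2`, `ρ_p > 0`, `ν ∈ (0,1]` and set `ρ = ν·ρ_p`.  For each
`c > 1/ν` let `β c` be the (unique) positive solution of
`1 = (2πρβ/α) · ∫_{(π ρ_p/c)^(α/2)}^{∞} τ^{-2/α}/(1 + τβ) dτ`.  Then
`β c → [(α/(2π²ρ)) · sin(2π/α)]^(α/2)` as `c → ∞`. -/
theorem stmt2 (α ρp ν : ℝ) (hα : 2 < α) (hρp : 0 < ρp) (hν : ν ∈ Ioc (0:ℝ) 1)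
    (ρ : ℝ) (hρ : ρ = ν * ρp) (β : ℝ → ℝ)
    (hβpos : ∀ c : ℝ, 1 / ν < c → 0 < β c)
    (hβeq : ∀ c : ℝ, 1 / ν < c →
      1 = (2 * π * ρ * β c / α) *
        ∫ τ in Ioi ((π * ρp / c) ^ (α / 2)), τ ^ (-2 / α) / (1 + τ * β c)) :
    Tendsto β atTop (nhds ((α / (2 * π ^ 2 * ρ) * Real.sin (2 * π / α)) ^ (α / 2))) :=
  stmt2_general α ρp ν hα hρp ρ β hβpos hβeq
end

section
/- Fix ρ_p > 0, h > 0, and a point X_T ∈ ℝ². For each integer n ≥ 2 let R_n = √(n/(π ρ_p)) and let X_1, …, X_n be i.i.d. random points uniformly distributed on the closed disk of radius R_n centered at the origin in ℝ². Define P_1 = 1 if and only if |X_1 − X_T| ≥ h and |X_1 − X_j| ≥ h for every j ≠ 1, and P_1 = 0 otherwise. Then lim_{n→∞} Pr(P_1 = 1) = exp(−π ρ_p h²). -/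
/-!
Conditionally on `X₁ = y`, the other `n - 1` points avoid the ball `B(y, h)` independently,
so `Pr(P₁ = 1) = ∫_{|y - X_T| ≥ h} μ_n(B(y, h)ᶜ) ^ (n - 1) dμ_n(y)`. When `B(y, h)` lies
inside the disk, i.e. `|y| ≤ R_n - h`, the integrand is exactly
`(1 - h² / R_n²) ^ (n - 1) = (1 - π ρ_p h² / n) ^ (n - 1)`. The remaining points `y` (the
annulus `|y| > R_n - h` and the ball `B(X_T, h)`) have `μ_n`-mass at most `2 h / R_n → 0`,
so the probability is within `2 h / R_n` of `(1 - π ρ_p h² / n) ^ (n - 1) → exp (-π ρ_p h²)`.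
-/

open MeasureTheory ProbabilityTheory Set Real Filter

noncomputable def unifDisk (R : ℝ) : Measure (EuclideanSpace ℝ (Fin 2)) :=
  (volume (Metric.closedBall (0 : EuclideanSpace ℝ (Fin 2)) R))⁻¹ •
    volume.restrict (Metric.closedBall (0 : EuclideanSpace ℝ (Fin 2)) R)

open Metric
open scoped ENNReal Topology

local notation "ℝ²" => EuclideanSpace ℝ (Fin 2)

section IIDPoints

variable {Ω E : Type*} [MeasurableSpace Ω] [MeasurableSpace E] {μ : Measure E}
  {S : Set E} {G : Set (E × E)} {n : ℕ}

lemma measurableSet_fst_mem_and_forall_mem (hS : MeasurableSet S) (hG : MeasurableSet G) :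
    MeasurableSet {p : E × (Fin n → E) | p.1 ∈ S ∧ ∀ k, (p.1, p.2 k) ∈ G} := by
  simp only [Set.ofPred_and, Set.ofPred_forall]
  exact (measurable_fst hS).inter <| .iInter fun k =>
    (measurable_fst.prodMk ((measurable_pi_apply k).comp measurable_snd)) hG

lemma measurableSet_zero_mem_and_forall_ne_zero_mem (hS : MeasurableSet S)
    (hG : MeasurableSet G) :
    MeasurableSet {x : Fin (n + 1) → E | x 0 ∈ S ∧ ∀ j ≠ 0, (x 0, x j) ∈ G} := by
  simp only [Set.ofPred_and, Set.ofPred_forall]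
  exact (measurable_pi_apply 0 hS).inter <| .iInter fun j => .iInter fun _ =>
    ((measurable_pi_apply 0).prodMk (measurable_pi_apply j)) hG

lemma MeasureTheory.Measure.pi_setOf_zero_mem_and_forall_ne_zero_mem [SigmaFinite μ]
    (hS : MeasurableSet S) (hG : MeasurableSet G) :
    Measure.pi (fun _ : Fin (n + 1) => μ) {x | x 0 ∈ S ∧ ∀ j ≠ 0, (x 0, x j) ∈ G}
      = ∫⁻ y in S, μ (Prod.mk y ⁻¹' G) ^ n ∂μ := by
  set T := {p : E × (Fin n → E) | p.1 ∈ S ∧ ∀ k, (p.1, p.2 k) ∈ G}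
  have hpre : (MeasurableEquiv.piFinSuccAbove (fun _ => E) 0).symm ⁻¹'
      {x | x 0 ∈ S ∧ ∀ j ≠ 0, (x 0, x j) ∈ G} = T := by
    ext ⟨y, z⟩
    simp [T, MeasurableEquiv.piFinSuccAbove_symm_apply, Fin.forall_fin_succ]
  rw [← (measurePreserving_piFinSuccAbove (fun _ => μ) 0).symm.measure_preimage_equiv, hpre,
    Measure.prod_apply (measurableSet_fst_mem_and_forall_mem hS hG),
    ← lintegral_indicator hS]
  refine lintegral_congr fun y => ?_
  by_cases hy : y ∈ S
  · have : Prod.mk y ⁻¹' T = Set.univ.pi fun _ => Prod.mk y ⁻¹' G := by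
      ext z; simp [T, hy, Set.mem_pi]
    rw [this, Measure.pi_pi, Set.indicator_of_mem hy]
    simp
  · have : Prod.mk y ⁻¹' T = ∅ := by
      ext z; simp [T, hy]
    rw [this, measure_empty, Set.indicator_of_notMem hy]

lemma ProbabilityTheory.iIndepFun.measure_zero_mem_and_forall_ne_zero_mem {P : Measure Ω}
    {X : Fin (n + 1) → Ω → E} (hX : ∀ i, Measurable (X i)) (hind : iIndepFun X P)
    (hlaw : ∀ i, P.map (X i) = μ) (hS : MeasurableSet S) (hG : MeasurableSet G) :
    P {ω | X 0 ω ∈ S ∧ ∀ j ≠ 0, (X 0 ω, X j ω) ∈ G}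
      = ∫⁻ y in S, μ (Prod.mk y ⁻¹' G) ^ n ∂μ := by
  have := hind.isProbabilityMeasure
  have : IsProbabilityMeasure μ := hlaw 0 ▸ Measure.isProbabilityMeasure_map (hX 0).aemeasurable
  have hjoint : P.map (fun ω i => X i ω) = Measure.pi fun _ => μ := by
    simp only [hind.map_fun_eq_pi_map fun i => (hX i).aemeasurable, hlaw]
  rw [← Measure.pi_setOf_zero_mem_and_forall_ne_zero_mem hS hG, ← hjoint,
    Measure.map_apply (measurable_pi_lambda _ hX)
      (measurableSet_zero_mem_and_forall_ne_zero_mem hS hG)]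
  rfl

end IIDPoints

lemma abs_toReal_lintegral_sub_le_of_eqOn {α : Type*} [MeasurableSpace α] {μ : Measure α}
    [IsFiniteMeasure μ] {f g : α → ℝ≥0∞} (hf : f ≤ 1) (hg : g ≤ 1) {A : Set α}
    (hA : MeasurableSet A) (hfg : Set.EqOn f g A) :
    |(∫⁻ x, f x ∂μ).toReal - (∫⁻ x, g x ∂μ).toReal| ≤ μ.real Aᶜ := by
  have hfin {u : α → ℝ≥0∞} (hu : u ≤ 1) : ∫⁻ x, u x ∂μ ≠ ⊤ :=
    ((lintegral_mono hu).trans_lt (by simp [measure_lt_top])).ne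
  have key {u v : α → ℝ≥0∞} (hu : u ≤ 1) (hv : v ≤ 1) (huv : Set.EqOn u v A) :
      (∫⁻ x, u x ∂μ).toReal ≤ (∫⁻ x, v x ∂μ).toReal + μ.real Aᶜ := by
    have hpt : u ≤ fun x => v x + Aᶜ.indicator 1 x := fun x => by
      by_cases hx : x ∈ A
      · simp [huv hx]
      · simpa [hx] using (hu x).trans le_add_self
    have hle : ∫⁻ x, u x ∂μ ≤ ∫⁻ x, v x ∂μ + μ Aᶜ :=
      calc ∫⁻ x, u x ∂μ ≤ ∫⁻ x, v x + Aᶜ.indicator 1 x ∂μ := lintegral_mono hpt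
        _ = ∫⁻ x, v x ∂μ + μ Aᶜ := by
          rw [lintegral_add_right _ (measurable_one.indicator hA.compl),
            lintegral_indicator_one hA.compl]
    rw [measureReal_def, ← ENNReal.toReal_add (hfin hv) (measure_ne_top _ _)]
    exact ENNReal.toReal_mono (ENNReal.add_ne_top.mpr ⟨hfin hv, measure_ne_top _ _⟩) hle
  rw [abs_sub_le_iff]
  constructor <;> linarith [key hf hg hfg, key hg hf hfg.symm]

section UnifDisk

variable {R r h : ℝ}

lemma unifDisk_apply_le (R : ℝ) (s : Set ℝ²) :
    unifDisk R s ≤ (volume (closedBall (0 : ℝ²) R))⁻¹ * volume s := by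
  rw [unifDisk, Measure.smul_apply, smul_eq_mul,
    Measure.restrict_apply' measurableSet_closedBall]
  gcongr
  exact Set.inter_subset_left

lemma unifDisk_apply_of_subset {s : Set ℝ²} (hs : s ⊆ closedBall 0 R) :
    unifDisk R s = (volume (closedBall (0 : ℝ²) R))⁻¹ * volume s := by
  rw [unifDisk, Measure.smul_apply, smul_eq_mul,
    Measure.restrict_apply' measurableSet_closedBall, Set.inter_eq_left.mpr hs]

lemma inv_volume_closedBall_mul_volume_ball (hR : 0 < R) (hr : 0 ≤ r) (x : ℝ²) :
    (volume (closedBall (0 : ℝ²) R))⁻¹ * volume (ball x r)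
      = ENNReal.ofReal (r ^ 2 / R ^ 2) := by
  rw [EuclideanSpace.volume_closedBall_fin_two, EuclideanSpace.volume_ball_fin_two,
    ← ENNReal.ofReal_pow hR.le, ← ENNReal.ofReal_pow hr, ← ENNReal.ofReal_mul (by positivity),
    ← ENNReal.ofReal_mul (by positivity), ← ENNReal.ofReal_inv_of_pos (by positivity),
    ← ENNReal.ofReal_mul (by positivity)]
  congr 1
  field_simp

lemma isProbabilityMeasure_unifDisk (hR : 0 < R) : IsProbabilityMeasure (unifDisk R) := by
  constructor
  rw [unifDisk, Measure.smul_apply, Measure.restrict_apply_univ, smul_eq_mul,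
    ENNReal.inv_mul_cancel (measure_closedBall_pos volume 0 hR).ne' measure_closedBall_lt_top.ne]

lemma unifDisk_ball_of_subset (hR : 0 < R) (hr : 0 ≤ r) {x : ℝ²}
    (hsub : ball x r ⊆ closedBall 0 R) :
    unifDisk R (ball x r) = ENNReal.ofReal (r ^ 2 / R ^ 2) := by
  rw [unifDisk_apply_of_subset hsub, inv_volume_closedBall_mul_volume_ball hR hr]

lemma unifDisk_ball_le (hR : 0 < R) (hr : 0 ≤ r) (x : ℝ²) :
    unifDisk R (ball x r) ≤ ENNReal.ofReal (r ^ 2 / R ^ 2) :=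
  (unifDisk_apply_le R _).trans_eq (inv_volume_closedBall_mul_volume_ball hR hr x)

lemma unifDisk_closedBall_zero (hR : 0 < R) (hr : 0 ≤ r) (hrR : r ≤ R) :
    unifDisk R (closedBall 0 r) = ENNReal.ofReal (r ^ 2 / R ^ 2) := by
  rw [unifDisk_apply_of_subset (closedBall_subset_closedBall hrR),
    Measure.addHaar_closedBall_eq_addHaar_ball volume (0 : ℝ²) r,
    inv_volume_closedBall_mul_volume_ball hR hr]

lemma unifDisk_setOf_le_dist (hR : 0 < R) (hh : 0 ≤ h) {y : ℝ²}
    (hy : y ∈ closedBall 0 (R - h)) :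
    unifDisk R {w | h ≤ dist y w} = ENNReal.ofReal (1 - h ^ 2 / R ^ 2) := by
  have := isProbabilityMeasure_unifDisk hR
  have hsub : ball y h ⊆ closedBall 0 R := ball_subset_closedBall.trans
    (closedBall_subset_closedBall' (by linarith [mem_closedBall.mp hy]))
  have hcompl : {w | h ≤ dist y w} = (ball y h)ᶜ := by
    ext w; simp [dist_comm]
  rw [hcompl, prob_compl_eq_one_sub measurableSet_ball, unifDisk_ball_of_subset hR hh hsub,
    ENNReal.ofReal_sub _ (by positivity), ENNReal.ofReal_one]

lemma unifDisk_real_compl_closedBall_inter_le (hR : 0 < R) (hh : 0 ≤ h) (hhR : h ≤ R)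
    (x : ℝ²) :
    (unifDisk R).real (closedBall 0 (R - h) ∩ {y | h ≤ dist y x})ᶜ ≤ 2 * h / R := by
  have := isProbabilityMeasure_unifDisk hR
  have hcompl : {y | h ≤ dist y x}ᶜ = ball x h := by
    ext y; simp
  have hinner : (unifDisk R).real (closedBall 0 (R - h)) = (R - h) ^ 2 / R ^ 2 := by
    rw [measureReal_def, unifDisk_closedBall_zero hR (by linarith) (by linarith),
      ENNReal.toReal_ofReal (by positivity)]
  have hball : (unifDisk R).real (ball x h) ≤ h ^ 2 / R ^ 2 := by
    rw [measureReal_def]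
    exact ENNReal.toReal_le_of_le_ofReal (by positivity) (unifDisk_ball_le hR hh x)
  calc (unifDisk R).real (closedBall 0 (R - h) ∩ {y | h ≤ dist y x})ᶜ
      ≤ (unifDisk R).real (closedBall 0 (R - h))ᶜ + (unifDisk R).real (ball x h) := by
        rw [Set.compl_inter, hcompl]
        exact measureReal_union_le _ _
    _ ≤ (1 - (R - h) ^ 2 / R ^ 2) + h ^ 2 / R ^ 2 := by
        rw [probReal_compl_eq_one_sub measurableSet_closedBall, hinner]
        linarith
    _ = 2 * h / R := by
        field_simp
        ring

lemma abs_toReal_setLIntegral_unifDisk_pow_sub_le (hh : 0 < h) (hhR : h ≤ R)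
    (x : ℝ²) (n : ℕ) :
    |(∫⁻ y in {y | h ≤ dist y x}, unifDisk R {w | h ≤ dist y w} ^ n ∂unifDisk R).toReal
      - (1 - h ^ 2 / R ^ 2) ^ n| ≤ 2 * h / R := by
  have hR : 0 < R := hh.trans_le hhR
  have := isProbabilityMeasure_unifDisk hR
  have ht₀ : 0 ≤ h ^ 2 / R ^ 2 := by positivity
  have ht₁ : h ^ 2 / R ^ 2 ≤ 1 := div_le_one_of_le₀ (by gcongr) (by positivity)
  have hS : MeasurableSet {y : ℝ² | h ≤ dist y x} :=
    measurableSet_le measurable_const (measurable_id.dist measurable_const)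
  have hconst : (1 - h ^ 2 / R ^ 2) ^ n
      = (∫⁻ _, ENNReal.ofReal (1 - h ^ 2 / R ^ 2) ^ n ∂unifDisk R).toReal := by
    rw [lintegral_const, measure_univ, mul_one, ENNReal.toReal_pow,
      ENNReal.toReal_ofReal (by linarith)]
  rw [← lintegral_indicator hS, hconst]
  refine (abs_toReal_lintegral_sub_le_of_eqOn ?_ ?_ (measurableSet_closedBall.inter hS) ?_).trans
    (unifDisk_real_compl_closedBall_inter_le hR hh.le hhR x)
  · exact fun y => Set.indicator_le (fun y _ => pow_le_one' prob_le_one n) y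
  · exact fun _ => pow_le_one' (ENNReal.ofReal_le_one.mpr (by linarith)) n
  · rintro y ⟨hy, hyS⟩
    simp only [Set.indicator_of_mem hyS, unifDisk_setOf_le_dist hR hh.le hy]

end UnifDisk

lemma tendsto_one_sub_div_add_two_pow_succ (c : ℝ) :
    Tendsto (fun n : ℕ => (1 - c / ((n : ℝ) + 2)) ^ (n + 1)) atTop (𝓝 (exp (-c))) := by
  have hg : Tendsto (fun m : ℕ => (m : ℝ) * -(c / (m + 1))) atTop (𝓝 (-c)) := by
    have := (tendsto_natCast_div_add_atTop (1 : ℝ)).const_mul (-c)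
    rw [mul_one] at this
    exact this.congr fun m => by ring
  refine ((tendsto_one_add_pow_exp_of_tendsto hg).comp (tendsto_add_atTop_nat 1)).congr
    fun n => ?_
  simp only [Function.comp_apply]
  push_cast
  ring

theorem stmt8_general (ρp h : ℝ) (hρp : 0 < ρp) (hh : 0 < h)
    (XT : EuclideanSpace ℝ (Fin 2))
    (R : ℕ → ℝ) (hR : ∀ n : ℕ, R n = Real.sqrt (n / (π * ρp)))
    (Ω : ℕ → Type) [∀ n, MeasurableSpace (Ω n)]
    (P : (n : ℕ) → Measure (Ω n))
    (X : (n : ℕ) → Fin n → Ω n → EuclideanSpace ℝ (Fin 2))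
    (hmeas : ∀ n i, Measurable (X n i))
    (hindep : ∀ n, iIndepFun (X n) (P n))
    (hlaw : ∀ n (i : Fin n), (P n).map (X n i) = unifDisk (R n)) :
    Tendsto
      (fun n : ℕ =>
        ((P (n + 2)) {ω | h ≤ dist (X (n + 2) 0 ω) XT ∧
          ∀ j : Fin (n + 2), j ≠ 0 → h ≤ dist (X (n + 2) 0 ω) (X (n + 2) j ω)}).toReal)
      atTop (nhds (Real.exp (-(π * ρp * h ^ 2)))) := by
  have hR_sq (n : ℕ) : h ^ 2 / R (n + 2) ^ 2 = π * ρp * h ^ 2 / (n + 2) := by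
    rw [hR, sq_sqrt (by positivity)]
    push_cast
    field_simp
  have hR_atTop : Tendsto (fun n : ℕ => R (n + 2)) atTop atTop := by
    simp only [hR]
    refine tendsto_sqrt_atTop.comp (Tendsto.atTop_div_const (by positivity) ?_)
    exact tendsto_natCast_atTop_atTop.comp (tendsto_add_atTop_nat 2)
  have hS : MeasurableSet {y : ℝ² | h ≤ dist y XT} :=
    measurableSet_le measurable_const (measurable_id.dist measurable_const)
  have hG : MeasurableSet {p : ℝ² × ℝ² | h ≤ dist p.1 p.2} :=
    measurableSet_le measurable_const measurable_dist
  have hclose : ∀ᶠ n : ℕ in atTop,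
      |((P (n + 2)) {ω | h ≤ dist (X (n + 2) 0 ω) XT ∧
          ∀ j : Fin (n + 2), j ≠ 0 → h ≤ dist (X (n + 2) 0 ω) (X (n + 2) j ω)}).toReal
        - (1 - π * ρp * h ^ 2 / (n + 2)) ^ (n + 1)| ≤ 2 * h / R (n + 2) := by
    filter_upwards [hR_atTop.eventually_ge_atTop h] with n hhR
    have hrep := (hindep (n + 2)).measure_zero_mem_and_forall_ne_zero_mem (hmeas _) (hlaw _) hS hG
    simp only [Set.mem_ofPred_eq, Set.preimage_ofPred_eq] at hrep
    rw [hrep, ← hR_sq]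
    exact abs_toReal_setLIntegral_unifDisk_pow_sub_le hh hhR XT (n + 1)
  have herr : Tendsto (fun n : ℕ => 2 * h / R (n + 2)) atTop (𝓝 0) :=
    tendsto_const_nhds.div_atTop hR_atTop
  have hlim := (squeeze_zero_norm' hclose herr).add
    (tendsto_one_sub_div_add_two_pow_succ (π * ρp * h ^ 2))
  rw [zero_add] at hlim
  exact hlim.congr fun n => sub_add_cancel _ _

/-- HC-I marginal.  Fix `ρ_p > 0`, `h > 0` and `X_T ∈ ℝ²`.  For each
`n ≥ 2` let `R_n = √(n/(π ρ_p))` and let `X_1, …, X_n` be i.i.d. uniform on the closed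
disk of radius `R_n`.  With `P_1 = 1` iff `|X_1 − X_T| ≥ h` and `|X_1 − X_j| ≥ h` for all
`j ≠ 1`, we have `Pr(P_1 = 1) → exp(−π ρ_p h²)` as `n → ∞`. -/
theorem stmt8 (ρp h : ℝ) (hρp : 0 < ρp) (hh : 0 < h)
    (XT : EuclideanSpace ℝ (Fin 2))
    (R : ℕ → ℝ) (hR : ∀ n : ℕ, R n = Real.sqrt (n / (π * ρp)))
    (Ω : ℕ → Type) [∀ n, MeasurableSpace (Ω n)]
    (P : (n : ℕ) → Measure (Ω n)) (hprob : ∀ n, IsProbabilityMeasure (P n))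
    (X : (n : ℕ) → Fin n → Ω n → EuclideanSpace ℝ (Fin 2))
    (hmeas : ∀ n i, Measurable (X n i))
    (hindep : ∀ n, iIndepFun (X n) (P n))
    (hlaw : ∀ n (i : Fin n), (P n).map (X n i) = unifDisk (R n)) :
    Tendsto
      (fun n : ℕ =>
        ((P (n + 2)) {ω | h ≤ dist (X (n + 2) 0 ω) XT ∧
          ∀ j : Fin (n + 2), j ≠ 0 → h ≤ dist (X (n + 2) 0 ω) (X (n + 2) j ω)}).toReal)
      atTop (nhds (Real.exp (-(π * ρp * h ^ 2)))) :=
  stmt8_general ρp h hρp hh XT R hR Ω P X hmeas hindep hlaw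
end
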